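/- Let k ≥ 2, 0 < μ₁ < … < μ_k, β > μ_k, and set S(β) = 1 + β ∑_{j=1}^k 1/(μ_j - β). If S(β) < 0, then for each i, σ_i² := 1/((μ_i - β) S(β)) is positive and the vector (σ_i²)_i solves the system μ_i σ_i² + β ∑_{j ≠ i} σ_j² = 1 for all i. -/
import Mathlib


open Finset

theorem stmt_7 (k : ℕ) (hk : 2 ≤ k) (μ : Fin k → ℝ)
    (hμpos : ∀ i, 0 < μ i) (hμmono : StrictMono μ)
    (β : ℝ) (hβ : ∀ i, μ i < β)
    (S : ℝ) (hS : S = 1 + β * ∑ j, 1 / (μ j - β)) (hSneg : S < 0)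
    (σsq : Fin k → ℝ) (hσsq : ∀ i, σsq i = 1 / ((μ i - β) * S)) :
    ∀ i, 0 < σsq i ∧ μ i * σsq i + β * ∑ j ∈ univ \ {i}, σsq j = 1 := by
  intro i
  have hβ0 : 0 < β := lt_trans (hμpos i) (hβ i)
  have hβ0' : β ≠ 0 := ne_of_gt hβ0
  have hmi : μ i - β < 0 := sub_neg.mpr (hβ i)
  have hmi' : μ i - β ≠ 0 := ne_of_lt hmi
  have hS0 : S ≠ 0 := ne_of_lt hSneg
  have h1 : β * ∑ j, 1 / (μ j - β) = S - 1 := by rw [hS]; ring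
  have hsum : ∑ j, σsq j = (∑ j, 1 / (μ j - β)) * (1 / S) := by
    simp only [hσsq, one_div, mul_inv]
    rw [← Finset.sum_mul]
  have hsd : ∑ j ∈ univ \ {i}, σsq j = (∑ j, σsq j) - σsq i := by
    rw [← Finset.erase_eq, Finset.sum_erase_eq_sub (mem_univ i)]
  refine ⟨?_, ?_⟩
  · rw [hσsq]
    exact one_div_pos.mpr (mul_pos_of_neg_of_neg hmi hSneg)
  · rw [hsd, hsum, hσsq]
    have h2 : ∑ j, 1 / (μ j - β) = (S - 1) / β := by
      field_simp at h1 ⊢; linarith [h1]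
    rw [h2]
    field_simp
    ring
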